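/- arXiv:2505.10005 — 3 statements merged into one kernel-verified Lean document; each statement's English description precedes it below -/
import Mathlib

section
/- In any jump game (on a finite simple connected graph with at least one empty node), for every equilibrium assignment v and every assignment w, CE(w) ≤ (n + max_T n_T)·CE(v); in particular CE(w) ≤ 2n·CE(v), so the price of anarchy with respect to the number of colorful edges is at most 2n. -/
open Finset

variable {V : Type*} {A : Type*} {T : Type*}

/-- Utility of agent `i` under assignment `σ`: the number of distinct types,
different from `t i`, among the agents occupying nodes adjacent to `σ i`. -/
noncomputable def util (G : SimpleGraph V) (t : A → T) (σ : A ↪ V) (i : A) : ℕ :=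
  {c : T | c ≠ t i ∧ ∃ j : A, G.Adj (σ i) (σ j) ∧ t j = c}.ncard

/-- Type-count of node `w` under assignment `σ`: the number of distinct types
among the agents occupying nodes adjacent to `w`. -/
noncomputable def tauN (G : SimpleGraph V) (t : A → T) (σ : A ↪ V) (w : V) : ℕ :=
  {c : T | ∃ j : A, G.Adj w (σ j) ∧ t j = c}.ncard

/-- A node is empty under `σ` if no agent occupies it. -/
def IsEmptyNode (σ : A ↪ V) (w : V) : Prop := ∀ i : A, σ i ≠ w

/-- `σ'` is obtained from `σ` by an improving jump of agent `i`. -/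
def ImpJump (G : SimpleGraph V) (t : A → T) (σ σ' : A ↪ V) (i : A) : Prop :=
  (∀ j : A, j ≠ i → σ' j = σ j) ∧ IsEmptyNode σ (σ' i) ∧
    util G t σ i < util G t σ' i

/-- An assignment is an equilibrium if no agent has an improving jump. -/
def IsEquilibrium (G : SimpleGraph V) (t : A → T) (σ : A ↪ V) : Prop :=
  ∀ (σ' : A ↪ V) (i : A), ¬ ImpJump G t σ σ' i

/-- An improving response cycle: `f 0, f 1, …, f m` with `m ≥ 1`, `f m = f 0`,
and each step an improving jump of some agent. -/
def IsIRC (G : SimpleGraph V) (t : A → T) (m : ℕ) (f : ℕ → (A ↪ V)) : Prop :=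
  1 ≤ m ∧ f m = f 0 ∧ ∀ ℓ < m, ∃ i : A, ImpJump G t (f ℓ) (f (ℓ + 1)) i

/-- Social welfare: total utility of the agents. -/
noncomputable def socialWelfare [Fintype A] (G : SimpleGraph V) (t : A → T) (σ : A ↪ V) : ℕ :=
  ∑ i : A, util G t σ i

/-- Number of colorful edges: edges whose endpoints are occupied by agents of
different types. -/
noncomputable def colorfulEdges (G : SimpleGraph V) (t : A → T) (σ : A ↪ V) : ℕ :=
  {e ∈ G.edgeSet | ∃ i j : A, t i ≠ t j ∧ e = s(σ i, σ j)}.ncard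

/-- The set of monochromatic edges: edges whose endpoints are occupied by agents
of the same type. -/
def monoEdgeSet (G : SimpleGraph V) (t : A → T) (σ : A ↪ V) : Set (Sym2 V) :=
  {e ∈ G.edgeSet | ∃ i j : A, i ≠ j ∧ t i = t j ∧ e = s(σ i, σ j)}

/-- Number of monochromatic edges. -/
noncomputable def monoEdges (G : SimpleGraph V) (t : A → T) (σ : A ↪ V) : ℕ :=
  (monoEdgeSet G t σ).ncard

/-- `c(σ)`: the number of empty nodes adjacent to at most one type of agents. -/
noncomputable def emptyLowCount (G : SimpleGraph V) (t : A → T) (σ : A ↪ V) : ℕ :=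
  {w : V | IsEmptyNode σ w ∧ tauN G t σ w ≤ 1}.ncard

/-- `TE(σ)`: the total type-count of the empty nodes. -/
noncomputable def totalEmptyTypeCount (G : SimpleGraph V) (t : A → T) (σ : A ↪ V) : ℕ :=
  ∑ᶠ w ∈ {w : V | IsEmptyNode σ w}, tauN G t σ w

open Classical in
/-- `B(σ)`: 1 if two (distinct) empty nodes are adjacent, 0 otherwise. -/
noncomputable def adjEmptyIndicator (G : SimpleGraph V) (σ : A ↪ V) : ℕ :=
  if ∃ w₁ w₂ : V, IsEmptyNode σ w₁ ∧ IsEmptyNode σ w₂ ∧ G.Adj w₁ w₂ then 1 else 0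

/-- `n_T`: the number of agents of type `c`. -/
noncomputable def typeCount (t : A → T) (c : T) : ℕ := {i : A | t i = c}.ncard

lemma walk_aux {V A : Type*} {G : SimpleGraph V} (v : A ↪ V) {x y : V} (p : G.Walk x y) :
    IsEmptyNode v x → (∃ i, v i = y) → ∃ z j, IsEmptyNode v z ∧ G.Adj z (v j) := by
  induction p with
  | nil => rintro hx ⟨i, hi⟩; exact absurd hi (hx i)
  | @cons a b c h p ih =>
    intro hx hy
    by_cases hocc : ∃ j : A, v j = b
    · obtain ⟨j, hj⟩ := hocc
      exact ⟨a, j, hx, hj ▸ h⟩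
    · exact ih (fun i hi => hocc ⟨i, hi⟩) hy

lemma exists_empty_adj {V A : Type*} [Fintype V] [Fintype A] [Nonempty A]
    {G : SimpleGraph V} (hG : G.Connected) (hVA : Fintype.card A < Fintype.card V)
    (v : A ↪ V) : ∃ z j, IsEmptyNode v z ∧ G.Adj z (v j) := by
  have hz : ∃ z, IsEmptyNode v z := by
    by_contra h
    push_neg at h
    simp only [IsEmptyNode, not_forall, not_not] at h
    have : Function.Surjective v := fun z => h z
    exact absurd (Fintype.card_le_of_surjective v this) (by omega)
  obtain ⟨z, hz⟩ := hz
  obtain ⟨i₀⟩ := ‹Nonempty A›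
  obtain ⟨p⟩ := hG.preconnected z (v i₀)
  exact walk_aux v p hz ⟨i₀, rfl⟩

lemma no_zero_jump {V A T : Type*} [Fintype T] {G : SimpleGraph V} {t : A → T} {v : A ↪ V}
    (heq : IsEquilibrium G t v) {i : A} (hi : ∀ j, G.Adj (v i) (v j) → t j = t i)
    {z : V} (hz : IsEmptyNode v z) {j : A} (hadj : G.Adj z (v j)) : t j = t i := by
  classical
  by_contra htj
  have hji : j ≠ i := fun h => htj (by rw [h])
  set f : A → V := Function.update v i z with hf
  have hfinj : Function.Injective f := by
    intro a b hab
    rw [hf] at hab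
    by_cases ha : a = i <;> by_cases hb : b = i
    · rw [ha, hb]
    · rw [ha, Function.update_self, Function.update_of_ne hb] at hab
      exact absurd hab.symm (hz b)
    · rw [hb, Function.update_self, Function.update_of_ne ha] at hab
      exact absurd hab (hz a)
    · rw [Function.update_of_ne ha, Function.update_of_ne hb] at hab
      exact v.injective hab
  set σ' : A ↪ V := ⟨f, hfinj⟩ with hσ'
  have hcoe : ∀ a : A, σ' a = f a := fun a => rfl
  apply heq σ' i
  have hii : σ' i = z := by rw [hcoe, hf]; exact Function.update_self _ _ _
  refine ⟨fun k hk => by rw [hcoe, hf]; exact Function.update_of_ne hk _ _, ?_, ?_⟩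
  · rw [hii]; exact hz
  · have h0 : util G t v i = 0 := by
      have he : {c : T | c ≠ t i ∧ ∃ j, G.Adj (v i) (v j) ∧ t j = c} = ∅ := by
        ext c
        simp only [Set.mem_setOf_eq, Set.mem_empty_iff_false, iff_false, not_and]
        rintro hc ⟨k, hk, rfl⟩
        exact hc (hi k hk)
      rw [util, he, Set.ncard_empty]
    have h1 : 0 < util G t σ' i := by
      rw [util, Set.ncard_pos (Set.toFinite _)]
      refine ⟨t j, htj, j, ?_, rfl⟩
      have h3 : σ' j = v j := by rw [hcoe, hf]; exact Function.update_of_ne hji _ _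
      rw [hii, h3]; exact hadj
    omega


/-- In any jump game, for every equilibrium `v` and every
assignment `w`, `CE(w) ≤ (n + max_T n_T)·CE(v)`; in particular
`CE(w) ≤ 2n·CE(v)`, so the price of anarchy w.r.t. colorful edges is at most
2n. -/
theorem stmt_16 {V A T : Type*} [Fintype V] [Fintype A] [Fintype T]
    (G : SimpleGraph V) (hG : G.Connected)
    (hA : 2 ≤ Fintype.card A) (hVA : Fintype.card A < Fintype.card V)
    (t : A → T) (ht : Function.Surjective t) (hT : 2 ≤ Fintype.card T)
    (v : A ↪ V) (heq : IsEquilibrium G t v) (w : A ↪ V) :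
    colorfulEdges G t w ≤
        (Fintype.card A + Finset.univ.sup (fun c : T => typeCount t c)) *
          colorfulEdges G t v ∧
    colorfulEdges G t w ≤ 2 * Fintype.card A * colorfulEdges G t v := by
  classical
  haveI hAne : Nonempty A := Fintype.card_pos_iff.mp (by omega)
  haveI hTne : Nonempty T := Fintype.card_pos_iff.mp (by omega)
  set n := Fintype.card A with hn
  set M := Finset.univ.sup (fun c : T => typeCount t c) with hM
  obtain ⟨c₀, -, hc₀⟩ := Finset.exists_mem_eq_sup (Finset.univ : Finset T)
    Finset.univ_nonempty (fun c => typeCount t c)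
  have htc_le : ∀ c : T, typeCount t c ≤ M := fun c => Finset.le_sup (Finset.mem_univ c)
  have hMn : M ≤ n := by
    rw [hM, hc₀, typeCount]
    calc {i : A | t i = c₀}.ncard ≤ (Set.univ : Set A).ncard :=
          Set.ncard_le_ncard (Set.subset_univ _) (Set.toFinite _)
      _ = n := by rw [Set.ncard_univ, Nat.card_eq_fintype_card]
  -- Lower bound: n - M ≤ 2 * CE(v)
  set CEv : Set (Sym2 V) := {e ∈ G.edgeSet | ∃ i j : A, t i ≠ t j ∧ e = s(v i, v j)} with hCEvdef
  have hcev : colorfulEdges G t v = CEv.ncard := rfl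
  have hrepv : ∀ e : Sym2 V, e ∈ CEv → ∃ p : A × A, t p.1 ≠ t p.2 ∧ e = s(v p.1, v p.2) := by
    rintro e ⟨-, i, j, hij, he⟩; exact ⟨(i, j), hij, he⟩
  choose! P hP1 hP2 using hrepv
  set Z' : Set A := {i : A | ∃ j, G.Adj (v i) (v j) ∧ t j ≠ t i} with hZ'def
  have hrepz : ∀ i : A, i ∈ Z' → ∃ j : A, G.Adj (v i) (v j) ∧ t j ≠ t i := fun i hi => hi
  choose! J hJ1 hJ2 using hrepz
  have hg : ∀ i ∈ Z', s(v i, v (J i)) ∈ CEv := fun i hi =>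
    ⟨G.mem_edgeSet.mpr (hJ1 i hi), i, J i, (hJ2 i hi).symm, rfl⟩
  have hPm : ∀ i ∈ Z', i = (P s(v i, v (J i))).1 ∨ i = (P s(v i, v (J i))).2 := by
    intro i hi
    have h2 := hP2 _ (hg i hi)
    rw [Sym2.eq_iff] at h2
    rcases h2 with ⟨h, -⟩ | ⟨h, -⟩
    · exact Or.inl (v.injective h)
    · exact Or.inr (v.injective h)
  set Z₁ : Set A := {i : A | i ∈ Z' ∧ i = (P s(v i, v (J i))).1} with hZ₁def
  set Z₂ : Set A := {i : A | i ∈ Z' ∧ i ≠ (P s(v i, v (J i))).1} with hZ₂def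
  have hZsplit : Z' = Z₁ ∪ Z₂ := by
    ext i
    simp only [hZ₁def, hZ₂def, Set.mem_union, Set.mem_setOf_eq]
    tauto
  have hZdisj : Disjoint Z₁ Z₂ := by
    rw [Set.disjoint_left]
    rintro i ⟨-, h1⟩ ⟨-, h2⟩
    exact h2 h1
  have hZ1le : Z₁.ncard ≤ CEv.ncard := by
    apply Set.ncard_le_ncard_of_injOn (fun i => s(v i, v (J i)))
      (fun i hi => hg i hi.1) ?_ (Set.toFinite _)
    intro a ha b hb hab
    have hab' : s(v a, v (J a)) = s(v b, v (J b)) := hab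
    rw [ha.2, hb.2, hab']
  have hZ2le : Z₂.ncard ≤ CEv.ncard := by
    apply Set.ncard_le_ncard_of_injOn (fun i => s(v i, v (J i)))
      (fun i hi => hg i hi.1) ?_ (Set.toFinite _)
    intro a ha b hb hab
    have hab' : s(v a, v (J a)) = s(v b, v (J b)) := hab
    have ha2 : a = (P s(v a, v (J a))).2 := (hPm a ha.1).resolve_left ha.2
    have hb2 : b = (P s(v b, v (J b))).2 := (hPm b hb.1).resolve_left hb.2
    rw [ha2, hb2, hab']
  have hZcard : Z'.ncard = Z₁.ncard + Z₂.ncard := by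
    rw [hZsplit, Set.ncard_union_eq hZdisj (Set.toFinite _) (Set.toFinite _)]
  have hZc : ∀ i : A, i ∉ Z' → ∀ j, G.Adj (v i) (v j) → t j = t i := by
    intro i hi j hadj
    by_contra hne
    exact hi ⟨j, hadj, hne⟩
  have hZ0 : (Z'ᶜ).ncard ≤ M := by
    rcases Set.eq_empty_or_nonempty (Z'ᶜ) with he | ⟨i₀, hi₀⟩
    · rw [he, Set.ncard_empty]; omega
    · obtain ⟨z, j, hz, hadj⟩ := exists_empty_adj hG hVA v
      have hsub : Z'ᶜ ⊆ {i : A | t i = t i₀} := by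
        intro i hi
        have h1 := no_zero_jump heq (hZc i hi) hz hadj
        have h2 := no_zero_jump heq (hZc i₀ hi₀) hz hadj
        exact h1.symm.trans h2
      calc (Z'ᶜ).ncard ≤ {i : A | t i = t i₀}.ncard :=
            Set.ncard_le_ncard hsub (Set.toFinite _)
        _ = typeCount t (t i₀) := rfl
        _ ≤ M := htc_le _
  have hcompl : Z'.ncard + (Z'ᶜ).ncard = n := by
    rw [← Set.ncard_union_eq disjoint_compl_right (Set.toFinite _) (Set.toFinite _),
      Set.union_compl_self, Set.ncard_univ, Nat.card_eq_fintype_card]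
  have hlow : n ≤ 2 * colorfulEdges G t v + M := by
    rw [hcev]; omega
  -- Upper bound: 2 * CE(w) ≤ n*n - M*M
  set CEw : Set (Sym2 V) := {e ∈ G.edgeSet | ∃ i j : A, t i ≠ t j ∧ e = s(w i, w j)} with hCEwdef
  have hcew : colorfulEdges G t w = CEw.ncard := rfl
  have hrepw : ∀ e : Sym2 V, e ∈ CEw → ∃ p : A × A, t p.1 ≠ t p.2 ∧ e = s(w p.1, w p.2) := by
    rintro e ⟨-, i, j, hij, he⟩; exact ⟨(i, j), hij, he⟩
  choose! Q hQ1 hQ2 using hrepw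
  set Pset : Set (A × A) := {p : A × A | t p.1 ≠ t p.2} with hPsetdef
  have hQinj : Set.InjOn Q CEw := by
    intro e he e' he' hq
    rw [hQ2 e he, hQ2 e' he', hq]
  have hQ'inj : Set.InjOn (fun e => ((Q e).2, (Q e).1)) CEw := by
    intro e he e' he' hq
    simp only [Prod.mk.injEq] at hq
    rw [hQ2 e he, hQ2 e' he', hq.1, hq.2]
  have hdisj : Disjoint (Q '' CEw) ((fun e => ((Q e).2, (Q e).1)) '' CEw) := by
    rw [Set.disjoint_left]
    rintro x ⟨e, he, rfl⟩ ⟨e', he', hx⟩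
    simp only [Prod.ext_iff] at hx
    have hee' : e' = e := by
      rw [hQ2 e' he', hQ2 e he, hx.1, hx.2, Sym2.eq_swap]
    rw [hee'] at hx
    exact hQ1 e he (by rw [← hx.1, ← hx.2])
  have hsubP : Q '' CEw ∪ (fun e => ((Q e).2, (Q e).1)) '' CEw ⊆ Pset := by
    rintro x (⟨e, he, rfl⟩ | ⟨e, he, rfl⟩)
    · exact hQ1 e he
    · exact (hQ1 e he).symm
  have hup : 2 * CEw.ncard ≤ Pset.ncard := by
    have h1 : (Q '' CEw).ncard = CEw.ncard := Set.ncard_image_of_injOn hQinj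
    have h2 : ((fun e => ((Q e).2, (Q e).1)) '' CEw).ncard = CEw.ncard :=
      Set.ncard_image_of_injOn hQ'inj
    have h3 := Set.ncard_union_eq hdisj (Set.toFinite _) (Set.toFinite _)
    have h4 := Set.ncard_le_ncard hsubP (Set.toFinite _)
    omega
  -- count Pset
  have hPcompl : Pset.ncard + (Psetᶜ).ncard = n * n := by
    rw [← Set.ncard_union_eq disjoint_compl_right (Set.toFinite _) (Set.toFinite _),
      Set.union_compl_self, Set.ncard_univ, Nat.card_eq_fintype_card, Fintype.card_prod]
  have hS : ({i : A | t i = c₀} ×ˢ {i : A | t i = c₀} : Set (A × A)).ncard = M * M := by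
    have h1 : Nat.card (({i : A | t i = c₀} ×ˢ {i : A | t i = c₀} : Set (A × A))) =
        Nat.card {i : A | t i = c₀} * Nat.card {i : A | t i = c₀} := by
      rw [Nat.card_congr (Equiv.Set.prod _ _), Nat.card_prod]
    rw [← Nat.card_coe_set_eq, h1, Nat.card_coe_set_eq, hM, hc₀, typeCount]
  have hSsub : ({i : A | t i = c₀} ×ˢ {i : A | t i = c₀} : Set (A × A)) ⊆ Psetᶜ := by
    rintro ⟨a, b⟩ ⟨ha, hb⟩
    simp only [hPsetdef, Set.mem_compl_iff, Set.mem_setOf_eq, not_not, ne_eq]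
    simp only [Set.mem_setOf_eq] at ha hb
    rw [ha, hb]
  have hPle : Pset.ncard + M * M ≤ n * n := by
    calc Pset.ncard + M * M
        = Pset.ncard + ({i : A | t i = c₀} ×ˢ {i : A | t i = c₀} : Set (A × A)).ncard := by
          rw [hS]
      _ ≤ Pset.ncard + (Psetᶜ).ncard :=
          Nat.add_le_add_left (Set.ncard_le_ncard hSsub (Set.toFinite _)) _
      _ = n * n := hPcompl
  -- combine
  have hsq : n * n - M * M = (n + M) * (n - M) := by
    rw [← pow_two, ← pow_two]; exact Nat.sq_sub_sq n M
  have hnm : n - M ≤ 2 * colorfulEdges G t v := by omega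
  have h7 : 2 * colorfulEdges G t w ≤ 2 * ((n + M) * colorfulEdges G t v) := by
    calc 2 * colorfulEdges G t w = 2 * CEw.ncard := by rw [hcew]
      _ ≤ Pset.ncard := hup
      _ ≤ n * n - M * M := Nat.le_sub_of_add_le hPle
      _ = (n + M) * (n - M) := hsq
      _ ≤ (n + M) * (2 * colorfulEdges G t v) := Nat.mul_le_mul_left _ hnm
      _ = 2 * ((n + M) * colorfulEdges G t v) := by ring
  have hmain : colorfulEdges G t w ≤ (n + M) * colorfulEdges G t v :=
    Nat.le_of_mul_le_mul_left h7 (by norm_num)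
  refine ⟨hmain, le_trans hmain ?_⟩
  exact Nat.mul_le_mul_right _ (by omega)
end

section
/- In any jump game with exactly k = 2 symmetric types on a finite simple connected graph of maximum degree at most 2 (with at least one empty node), every equilibrium assignment v satisfies 2·CE(v) ≥ n, and every assignment w satisfies CE(w) ≤ n; hence CE(w) ≤ 2·CE(v), i.e., the price of anarchy with respect to the number of colorful edges is at most 2 (and there are instances attaining this bound). -/
open Finset

variable {V : Type*} {A : Type*} {T : Type*}

section AuxStmt17

variable {V A T : Type*}

lemma util_pos_iff17 [Fintype T] (G : SimpleGraph V) (t : A → T) (σ : A ↪ V) (i : A) :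
    0 < util G t σ i ↔ ∃ j, G.Adj (σ i) (σ j) ∧ t j ≠ t i := by
  rw [util, Set.ncard_pos (Set.toFinite _)]
  constructor
  · rintro ⟨c, hc, j, hadj, rfl⟩; exact ⟨j, hadj, hc⟩
  · rintro ⟨j, hadj, hne⟩; exact ⟨t j, hne, j, hadj, rfl⟩

lemma no_jump_target17 [Fintype T] {G : SimpleGraph V} {t : A → T} {σ : A ↪ V}
    (heq : IsEquilibrium G t σ) {i : A}
    (hi : ∀ j, G.Adj (σ i) (σ j) → t j = t i)
    {w : V} (hw : IsEmptyNode σ w) {j : A} (hadj : G.Adj w (σ j)) : t j = t i := by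
  classical
  by_contra hne
  have hji : j ≠ i := fun h => hne (by rw [h])
  have hinj : Function.Injective (Function.update σ i w) := by
    intro a b hab
    rcases eq_or_ne a i with ha | ha <;> rcases eq_or_ne b i with hb | hb
    · rw [ha, hb]
    · subst ha
      rw [Function.update_self, Function.update_of_ne hb] at hab
      exact absurd hab.symm (hw b)
    · subst hb
      rw [Function.update_self, Function.update_of_ne ha] at hab
      exact absurd hab (hw a)
    · rw [Function.update_of_ne ha, Function.update_of_ne hb] at hab
      exact σ.injective hab
  set σ' : A ↪ V := ⟨Function.update σ i w, hinj⟩ with hσ'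
  apply heq σ' i
  have hσ'i : σ' i = w := Function.update_self i w σ
  have hσ'j : σ' j = σ j := Function.update_of_ne hji w σ
  refine ⟨fun a ha => Function.update_of_ne ha w σ, by rwa [hσ'i], ?_⟩
  have h0 : util G t σ i = 0 := by
    by_contra h
    obtain ⟨a, hadj', hne'⟩ := (util_pos_iff17 G t σ i).mp (Nat.pos_of_ne_zero h)
    exact hne' (hi a hadj')
  rw [h0]
  exact (util_pos_iff17 G t σ' i).mpr ⟨j, by rw [hσ'i, hσ'j]; exact hadj, hne⟩

lemma empty_component17 {G : SimpleGraph V} {σ : A ↪ V}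
    (h : ∀ w, IsEmptyNode σ w → ∀ x, G.Adj w x → IsEmptyNode σ x) :
    ∀ {a b : V}, G.Walk a b → IsEmptyNode σ a → IsEmptyNode σ b := by
  intro a b p
  induction p with
  | nil => exact id
  | cons hadj _ ih => exact fun ha => ih (h _ ha _ hadj)

lemma typeCount_le_colorful17 [Fintype V] {G : SimpleGraph V} {t : A → T} {σ : A ↪ V} {c : T}
    (h : ∀ i, t i = c → ∃ j, G.Adj (σ i) (σ j) ∧ t j ≠ t i) :
    typeCount t c ≤ colorfulEdges G t σ := by
  classical
  set f : A → Sym2 V := fun i =>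
    if hi : ∃ j, G.Adj (σ i) (σ j) ∧ t j ≠ t i then s(σ i, σ hi.choose) else s(σ i, σ i)
    with hf
  have hfspec : ∀ i, t i = c →
      ∃ j, f i = s(σ i, σ j) ∧ G.Adj (σ i) (σ j) ∧ t j ≠ t i := by
    intro i hi
    have hex : ∃ j, G.Adj (σ i) (σ j) ∧ t j ≠ t i := h i hi
    exact ⟨hex.choose, by simp only [hf, dif_pos hex], hex.choose_spec⟩
  apply Set.ncard_le_ncard_of_injOn f _ _ (Set.toFinite _)
  · intro i hi
    simp only [Set.mem_setOf_eq] at hi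
    obtain ⟨j, hfi, hadj, hne⟩ := hfspec i hi
    exact ⟨by rw [hfi]; exact hadj, i, j, hne.symm, hfi⟩
  · intro i₁ h₁ i₂ h₂ hfe
    simp only [Set.mem_setOf_eq] at h₁ h₂
    obtain ⟨j₁, hfi₁, hadj₁, hne₁⟩ := hfspec i₁ h₁
    obtain ⟨j₂, hfi₂, hadj₂, hne₂⟩ := hfspec i₂ h₂
    rw [hfi₁, hfi₂, Sym2.eq_iff] at hfe
    rcases hfe with ⟨he, _⟩ | ⟨he₁, he₂⟩
    · exact σ.injective he
    · exfalso
      have : i₁ = j₂ := σ.injective he₁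
      apply hne₂
      rw [← this, h₁, h₂]

lemma colorful_le17 [Fintype V] [Fintype A] {G : SimpleGraph V} {t : A → T} {σ : A ↪ V}
    {c₀ c₁ : T} (huniv : ∀ c : T, c = c₀ ∨ c = c₁)
    (hdeg : ∀ u : V, (G.neighborSet u).ncard ≤ 2) :
    colorfulEdges G t σ ≤ 2 * typeCount t c₀ := by
  classical
  set S : Finset A := Finset.univ.filter (fun i => t i = c₀) with hS
  have hTC : typeCount t c₀ = S.card := by
    rw [typeCount, ← Set.ncard_coe_finset]
    congr 1
    ext i
    simp [hS]
  set E : Finset (Sym2 V) :=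
    S.biUnion (fun i => (Set.toFinite (G.neighborSet (σ i))).toFinset.image
      (fun v => s(σ i, v))) with hE
  have hsub : {e ∈ G.edgeSet | ∃ i j : A, t i ≠ t j ∧ e = s(σ i, σ j)} ⊆ ↑E := by
    rintro e ⟨heE, i, j, hne, rfl⟩
    rw [SimpleGraph.mem_edgeSet] at heE
    have hmem : ∀ a b : A, t a = c₀ → G.Adj (σ a) (σ b) → s(σ a, σ b) ∈ E := by
      intro a b ha hadj
      simp only [hE, Finset.coe_biUnion, Finset.mem_coe, Finset.mem_biUnion]
      refine ⟨a, by simp [hS, ha], ?_⟩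
      rw [Finset.mem_image]
      exact ⟨σ b, by rw [Set.Finite.mem_toFinset]; exact hadj, rfl⟩
    rcases huniv (t i) with hi | hi
    · exact hmem i j hi heE
    · have hj : t j = c₀ := by
        rcases huniv (t j) with hj | hj
        · exact hj
        · exact absurd (hi.trans hj.symm) hne
      have : s(σ i, σ j) = s(σ j, σ i) := Sym2.eq_swap
      rw [this]
      exact hmem j i hj heE.symm
  calc colorfulEdges G t σ ≤ (↑E : Set (Sym2 V)).ncard :=
        Set.ncard_le_ncard hsub (Set.toFinite _)
    _ = E.card := Set.ncard_coe_finset E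
    _ ≤ ∑ i ∈ S, ((Set.toFinite (G.neighborSet (σ i))).toFinset.image
          (fun v => s(σ i, v))).card := Finset.card_biUnion_le
    _ ≤ ∑ _i ∈ S, 2 := by
        apply Finset.sum_le_sum
        intro i _
        calc ((Set.toFinite (G.neighborSet (σ i))).toFinset.image
              (fun v => s(σ i, v))).card
            ≤ (Set.toFinite (G.neighborSet (σ i))).toFinset.card :=
              Finset.card_image_le
          _ = (G.neighborSet (σ i)).ncard :=
              (Set.ncard_eq_toFinset_card _ _).symm
          _ ≤ 2 := hdeg (σ i)
    _ = 2 * typeCount t c₀ := by rw [Finset.sum_const, smul_eq_mul, hTC, Nat.mul_comm]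

end AuxStmt17

/-- With k = 2 symmetric types on a graph of maximum degree at
most 2, every equilibrium `v` satisfies `2·CE(v) ≥ n`, every assignment `w`
satisfies `CE(w) ≤ n`, and hence `CE(w) ≤ 2·CE(v)`. -/
theorem stmt_17 {V A T : Type*} [Fintype V] [Fintype A] [Fintype T]
    (G : SimpleGraph V) (hG : G.Connected)
    (hdeg : ∀ u : V, (G.neighborSet u).ncard ≤ 2)
    (hA : 2 ≤ Fintype.card A) (hVA : Fintype.card A < Fintype.card V)
    (t : A → T) (ht : Function.Surjective t) (hk : Fintype.card T = 2)
    (hsym : ∀ c : T, Fintype.card T * typeCount t c = Fintype.card A) :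
    (∀ v : A ↪ V, IsEquilibrium G t v →
        Fintype.card A ≤ 2 * colorfulEdges G t v) ∧
    (∀ w : A ↪ V, colorfulEdges G t w ≤ Fintype.card A) ∧
    (∀ v : A ↪ V, IsEquilibrium G t v → ∀ w : A ↪ V,
        colorfulEdges G t w ≤ 2 * colorfulEdges G t v) := by
  classical
  obtain ⟨c₀, c₁, hcc, hU⟩ : ∃ a b : T, a ≠ b ∧ (Finset.univ : Finset T) = {a, b} := by
    have : (Finset.univ : Finset T).card = 2 := by rw [Finset.card_univ, hk]
    exact Finset.card_eq_two.mp this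
  have huniv : ∀ c : T, c = c₀ ∨ c = c₁ := by
    intro c
    have : c ∈ ({c₀, c₁} : Finset T) := hU ▸ Finset.mem_univ c
    simpa using this
  have hcard : ∀ c : T, 2 * typeCount t c = Fintype.card A := fun c => by
    rw [← hk]; exact hsym c
  have part1 : ∀ v : A ↪ V, IsEquilibrium G t v →
      Fintype.card A ≤ 2 * colorfulEdges G t v := by
    intro v hveq
    -- there is an empty node
    obtain ⟨w, hw⟩ : ∃ w, IsEmptyNode v w := by
      by_contra h
      push_neg at h
      simp only [IsEmptyNode] at h
      push_neg at h
      have hsurj : Function.Surjective v := fun w => h w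
      exact absurd (Fintype.card_le_of_surjective v hsurj) (not_le.mpr hVA)
    -- at least one of the two types is "good": all its agents see the other type
    have hgood : (∀ i, t i = c₀ → ∃ j, G.Adj (v i) (v j) ∧ t j ≠ t i) ∨
        (∀ i, t i = c₁ → ∃ j, G.Adj (v i) (v j) ∧ t j ≠ t i) := by
      by_contra h
      push_neg at h
      obtain ⟨⟨i₀, hi₀c, hi₀⟩, ⟨i₁, hi₁c, hi₁⟩⟩ := h
      -- no empty node is adjacent to an occupied node
      have hiso : ∀ w', IsEmptyNode v w' → ∀ x, G.Adj w' x → IsEmptyNode v x := by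
        intro w' hw' x hadj j hj
        rw [← hj] at hadj
        have h0 := no_jump_target17 hveq hi₀ hw' hadj
        have h1 := no_jump_target17 hveq hi₁ hw' hadj
        rw [hi₀c] at h0
        rw [hi₁c] at h1
        exact hcc (h0 ▸ h1)
      have := empty_component17 hiso ((hG.preconnected w (v i₀)).some) hw
      exact this i₀ rfl
    rcases hgood with hg | hg
    · calc Fintype.card A = 2 * typeCount t c₀ := (hcard c₀).symm
        _ ≤ 2 * colorfulEdges G t v :=
          Nat.mul_le_mul_left 2 (typeCount_le_colorful17 hg)
    · calc Fintype.card A = 2 * typeCount t c₁ := (hcard c₁).symm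
        _ ≤ 2 * colorfulEdges G t v :=
          Nat.mul_le_mul_left 2 (typeCount_le_colorful17 hg)
  have part2 : ∀ w : A ↪ V, colorfulEdges G t w ≤ Fintype.card A := by
    intro w
    calc colorfulEdges G t w ≤ 2 * typeCount t c₀ := colorful_le17 huniv hdeg
      _ = Fintype.card A := hcard c₀
  exact ⟨part1, part2, fun v hv w => le_trans (part2 w) (part1 v hv)⟩
end

section
/- In any jump game with symmetric types on a finite simple connected δ-regular graph (with at least one empty node), for every equilibrium assignment v and every assignment w, CE(w) ≤ 2δ·CE(v); that is, the price of anarchy with respect to the number of colorful edges is at most 2δ. -/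
open Finset

variable {V : Type*} {A : Type*} {T : Type*}

section AuxProofs

variable {V : Type*} {A : Type*} {T : Type*}

/-- Upper bound: twice the number of colorful edges is at most `n·δ`. -/
lemma aux_CE_ub [Fintype V] [Fintype A]
    (G : SimpleGraph V) {δ : ℕ} (hreg : ∀ u : V, (G.neighborSet u).ncard = δ)
    (t : A → T) (σ : A ↪ V) :
    2 * colorfulEdges G t σ ≤ Fintype.card A * δ := by
  classical
  set f : A × A → Sym2 V := fun p => s(σ p.1, σ p.2) with hf
  set S : Finset (A × A) := Finset.univ.filter (fun p => G.Adj (σ p.1) (σ p.2)) with hS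
  have hmemS : ∀ p : A × A, p ∈ S ↔ G.Adj (σ p.1) (σ p.2) := by
    intro p; simp [hS]
  have hCE : colorfulEdges G t σ ≤ (S.image f).card := by
    rw [colorfulEdges, Set.ncard_eq_toFinset_card']
    apply Finset.card_le_card
    intro e he
    simp only [Set.mem_toFinset, Set.mem_setOf_eq] at he
    obtain ⟨heE, i, j, hij, rfl⟩ := he
    exact Finset.mem_image.2 ⟨(i, j), (hmemS (i, j)).2 ((SimpleGraph.mem_edgeSet G).1 heE), rfl⟩
  have h2 : 2 * (S.image f).card ≤ S.card := by
    rw [Finset.card_eq_sum_card_image f S]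
    calc 2 * (S.image f).card = ∑ _e ∈ S.image f, 2 := by
          rw [Finset.sum_const, smul_eq_mul, mul_comm]
      _ ≤ ∑ e ∈ S.image f, (S.filter fun p => f p = e).card := by
          apply Finset.sum_le_sum
          intro e he
          obtain ⟨p, hp, rfl⟩ := Finset.mem_image.1 he
          have hadj : G.Adj (σ p.1) (σ p.2) := (hmemS p).1 hp
          have hne : p.1 ≠ p.2 := fun h => G.loopless.irrefl _ (h ▸ hadj)
          refine Finset.one_lt_card.2 ⟨p, ?_, (p.2, p.1), ?_, ?_⟩
          · exact Finset.mem_filter.2 ⟨hp, rfl⟩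
          · refine Finset.mem_filter.2 ⟨(hmemS (p.2, p.1)).2 hadj.symm, ?_⟩
            simp only [hf]
            exact Sym2.eq_swap
          · intro h
            exact hne (congrArg Prod.fst h)
  have hScard : S.card ≤ Fintype.card A * δ := by
    have hsub : S ⊆ Finset.univ.biUnion
        (fun i : A => (Finset.univ.filter fun j : A => G.Adj (σ i) (σ j)).image
          (fun j => (i, j))) := by
      intro p hp
      refine Finset.mem_biUnion.2 ⟨p.1, Finset.mem_univ _, ?_⟩
      exact Finset.mem_image.2 ⟨p.2, Finset.mem_filter.2 ⟨Finset.mem_univ _, (hmemS p).1 hp⟩, rfl⟩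
    calc S.card ≤ _ := Finset.card_le_card hsub
      _ ≤ ∑ i : A, ((Finset.univ.filter fun j : A => G.Adj (σ i) (σ j)).image
            (fun j => (i, j))).card := Finset.card_biUnion_le
      _ ≤ ∑ _i : A, δ := by
          apply Finset.sum_le_sum
          intro i _
          calc ((Finset.univ.filter fun j : A => G.Adj (σ i) (σ j)).image
                (fun j => (i, j))).card
              ≤ (Finset.univ.filter fun j : A => G.Adj (σ i) (σ j)).card :=
                Finset.card_image_le
            _ ≤ (G.neighborFinset (σ i)).card := by
                apply Finset.card_le_card_of_injOn σ
                · intro j hj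
                  rw [Finset.mem_coe, SimpleGraph.mem_neighborFinset]
                  exact (Finset.mem_filter.1 (Finset.mem_coe.1 hj)).2
                · intro a _ b _ hab
                  exact σ.injective hab
            _ = δ := by
                rw [SimpleGraph.neighborFinset_def, ← Set.ncard_eq_toFinset_card']
                exact hreg (σ i)
      _ = Fintype.card A * δ := by rw [Finset.sum_const, smul_eq_mul, Finset.card_univ]
  calc 2 * colorfulEdges G t σ ≤ 2 * (S.image f).card := by omega
    _ ≤ S.card := h2
    _ ≤ Fintype.card A * δ := hScard

/-- At an equilibrium, all agents with zero utility have the same type. -/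
lemma aux_zero_same_type [Fintype V] [Fintype A] [Fintype T]
    (G : SimpleGraph V) (hG : G.Connected)
    (hVA : Fintype.card A < Fintype.card V)
    (t : A → T) (v : A ↪ V) (heq : IsEquilibrium G t v)
    {i1 i2 : A} (h1 : util G t v i1 = 0) (h2 : util G t v i2 = 0) :
    t i1 = t i2 := by
  classical
  by_contra hne
  -- there is an empty node
  have himg : (Finset.univ.image v).card < Fintype.card V := by
    rw [Finset.card_image_of_injective _ v.injective, Finset.card_univ]
    exact hVA
  have : ∃ u : V, u ∉ Finset.univ.image v := by
    by_contra h
    push_neg at h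
    have : (Finset.univ : Finset V) ⊆ Finset.univ.image v := fun u _ => h u
    have := Finset.card_le_card this
    rw [Finset.card_univ] at this
    omega
  obtain ⟨u, hu⟩ := this
  -- boundary dart from the occupied set to the empty set
  obtain ⟨p⟩ := hG.preconnected (v i1) u
  have hstart : v i1 ∈ (↑(Finset.univ.image v) : Set V) := by
    simp
  have hend : u ∉ (↑(Finset.univ.image v) : Set V) := by
    simpa using hu
  obtain ⟨d, _, hdfst, hdsnd⟩ := p.exists_boundary_dart _ hstart hend
  obtain ⟨j, hj⟩ : ∃ j : A, v j = d.fst := by simpa using hdfst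
  have hempty : ∀ a : A, v a ≠ d.snd := by
    intro a ha
    exact hdsnd (by simp [← ha])
  -- choose the zero-utility agent whose type differs from t j
  obtain ⟨i, hi0, hitj⟩ : ∃ i : A, util G t v i = 0 ∧ t j ≠ t i := by
    rcases eq_or_ne (t j) (t i1) with h | h
    · exact ⟨i2, h2, h ▸ hne⟩
    · exact ⟨i1, h1, h⟩
  have hji : j ≠ i := fun h => hitj (congrArg t h)
  -- build the improving jump
  have hinj : Function.Injective (Function.update (v : A → V) i d.snd) := by
    intro a b hab
    by_cases ha : a = i
    · by_cases hb : b = i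
      · rw [ha, hb]
      · rw [ha, Function.update_self, Function.update_of_ne hb] at hab
        exact absurd hab.symm (hempty b)
    · by_cases hb : b = i
      · rw [hb, Function.update_self, Function.update_of_ne ha] at hab
        exact absurd hab (hempty a)
      · rw [Function.update_of_ne ha, Function.update_of_ne hb] at hab
        exact v.injective hab
  set σ' : A ↪ V := ⟨Function.update (v : A → V) i d.snd, hinj⟩ with hσ'
  have hσ'i : σ' i = d.snd := by simp [hσ']
  have hσ'j : σ' j = v j := by
    show Function.update (v : A → V) i d.snd j = v j
    rw [Function.update_of_ne hji]
  apply heq σ' i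
  refine ⟨?_, ?_, ?_⟩
  · intro a ha
    show Function.update (v : A → V) i d.snd a = v a
    rw [Function.update_of_ne ha]
  · rw [hσ'i]
    exact hempty
  · rw [hi0]
    rw [util]
    rw [Set.ncard_pos (Set.toFinite _)]
    refine ⟨t j, hitj, j, ?_, rfl⟩
    rw [hσ'i, hσ'j, hj]
    exact d.adj.symm

end AuxProofs

/-- With symmetric types on a δ-regular graph, for every
equilibrium `v` and every assignment `w`, `CE(w) ≤ 2δ·CE(v)`; i.e. the price of
anarchy w.r.t. colorful edges is at most 2δ. -/
theorem stmt_18 {V A T : Type*} [Fintype V] [Fintype A] [Fintype T]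
    (G : SimpleGraph V) (hG : G.Connected)
    (δ : ℕ) (hreg : ∀ u : V, (G.neighborSet u).ncard = δ)
    (hA : 2 ≤ Fintype.card A) (hVA : Fintype.card A < Fintype.card V)
    (t : A → T) (ht : Function.Surjective t) (hT : 2 ≤ Fintype.card T)
    (hsym : ∀ c : T, Fintype.card T * typeCount t c = Fintype.card A)
    (v : A ↪ V) (heq : IsEquilibrium G t v) (w : A ↪ V) :
    colorfulEdges G t w ≤ 2 * δ * colorfulEdges G t v := by
  classical
  -- positive- and zero-utility agents
  set P : Finset A := Finset.univ.filter (fun i => util G t v i ≠ 0) with hP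
  set Z : Finset A := Finset.univ.filter (fun i => util G t v i = 0) with hZ
  -- zero-utility agents all same type, hence 2|Z| ≤ n
  have hZn : 2 * Z.card ≤ Fintype.card A := by
    rcases Z.eq_empty_or_nonempty with h | ⟨i0, hi0⟩
    · rw [h]; simp
    · have hi0' : util G t v i0 = 0 := (Finset.mem_filter.1 hi0).2
      have hsubZ : Z ⊆ Finset.univ.filter (fun i => t i = t i0) := by
        intro i hi
        have : util G t v i = 0 := (Finset.mem_filter.1 hi).2
        exact Finset.mem_filter.2 ⟨Finset.mem_univ _,
          aux_zero_same_type G hG hVA t v heq this hi0'⟩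
      have hcard : (Finset.univ.filter (fun i => t i = t i0)).card = typeCount t (t i0) := by
        rw [typeCount, Set.ncard_eq_toFinset_card', Set.toFinset_setOf]
      have h2T : 2 * typeCount t (t i0) ≤ Fintype.card T * typeCount t (t i0) :=
        Nat.mul_le_mul_right _ hT
      have := Finset.card_le_card hsubZ
      rw [hcard] at this
      have hs := hsym (t i0)
      omega
  have hZP : Z.card + P.card = Fintype.card A := by
    have h := Finset.card_filter_add_card_filter_not
      (s := (Finset.univ : Finset A)) (p := fun i => util G t v i = 0)
    rw [Finset.card_univ] at h
    simpa [hZ, hP, ne_eq] using h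
  -- each positive-utility agent yields a colorful edge of v
  have hPC : P.card ≤ 2 * colorfulEdges G t v := by
    have hch : ∀ i ∈ P, ∃ j, G.Adj (v i) (v j) ∧ t j ≠ t i := by
      intro i hi
      have hne0 : util G t v i ≠ 0 := (Finset.mem_filter.1 hi).2
      obtain ⟨c, hc, j, hadj, rfl⟩ := Set.nonempty_of_ncard_ne_zero hne0
      exact ⟨j, hadj, hc⟩
    set g : A → Sym2 V := fun i =>
      if h : ∃ j, G.Adj (v i) (v j) ∧ t j ≠ t i then s(v i, v h.choose) else s(v i, v i)
      with hg
    have hgP : ∀ i ∈ P, ∃ j, G.Adj (v i) (v j) ∧ t j ≠ t i ∧ g i = s(v i, v j) := by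
      intro i hi
      have h := hch i hi
      exact ⟨h.choose, h.choose_spec.1, h.choose_spec.2, by rw [hg]; simp [h]⟩
    have himg : P.image g ⊆ ({e ∈ G.edgeSet | ∃ i j : A, t i ≠ t j ∧
        e = s(v i, v j)} : Set (Sym2 V)).toFinset := by
      intro e he
      obtain ⟨i, hi, rfl⟩ := Finset.mem_image.1 he
      obtain ⟨j, hadj, htj, hgi⟩ := hgP i hi
      rw [Set.mem_toFinset]
      exact ⟨by rw [hgi]; exact (SimpleGraph.mem_edgeSet G).2 hadj, i, j, htj.symm, hgi⟩
    have hfib : ∀ e ∈ P.image g, (P.filter fun i => g i = e).card ≤ 2 := by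
      intro e _
      induction e using Sym2.ind with
      | _ x y =>
        have hsub : (P.filter fun i => g i = s(x, y)) ⊆
            Finset.univ.filter (fun i => v i = x ∨ v i = y) := by
          intro i hi
          obtain ⟨hiP, hgi⟩ := Finset.mem_filter.1 hi
          obtain ⟨j, _, _, hgi'⟩ := hgP i hiP
          have : v i ∈ s(x, y) := by
            rw [← hgi, hgi']
            exact Sym2.mem_mk_left _ _
          exact Finset.mem_filter.2 ⟨Finset.mem_univ _, Sym2.mem_iff.1 this⟩
        calc (P.filter fun i => g i = s(x, y)).card
            ≤ (Finset.univ.filter (fun i => v i = x ∨ v i = y)).card :=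
              Finset.card_le_card hsub
          _ ≤ ({x, y} : Finset V).card := by
              apply Finset.card_le_card_of_injOn v
              · intro i hi
                rcases (Finset.mem_filter.1 hi).2 with h | h <;> simp [h]
              · intro a _ b _ hab
                exact v.injective hab
          _ ≤ 2 := Finset.card_insert_le _ _ |>.trans (by simp)
    have hCEv : colorfulEdges G t v = ({e ∈ G.edgeSet | ∃ i j : A, t i ≠ t j ∧
        e = s(v i, v j)} : Set (Sym2 V)).toFinset.card := by
      rw [colorfulEdges, Set.ncard_eq_toFinset_card']
    calc P.card = ∑ e ∈ P.image g, (P.filter fun i => g i = e).card :=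
          Finset.card_eq_sum_card_image g P
      _ ≤ ∑ _e ∈ P.image g, 2 := Finset.sum_le_sum hfib
      _ = 2 * (P.image g).card := by rw [Finset.sum_const, smul_eq_mul, mul_comm]
      _ ≤ 2 * colorfulEdges G t v := by
          rw [hCEv]
          exact Nat.mul_le_mul_left _ (Finset.card_le_card himg)
  -- combine
  have hub : 2 * colorfulEdges G t w ≤ Fintype.card A * δ := aux_CE_ub G hreg t w
  have hnP : Fintype.card A ≤ 2 * P.card := by omega
  have hn4 : Fintype.card A ≤ 4 * colorfulEdges G t v := by omega
  have hfinal : 2 * colorfulEdges G t w ≤ (4 * colorfulEdges G t v) * δ :=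
    hub.trans (Nat.mul_le_mul_right _ hn4)
  have heq4 : (4 * colorfulEdges G t v) * δ = 2 * (2 * δ * colorfulEdges G t v) := by ring
  rw [heq4] at hfinal
  omega
end
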